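/- arXiv:2001.05938 — 2 statements merged into one kernel-verified Lean document; each statement's English description precedes it below -/
import Mathlib

section
/- For a measurable function f : ℝ≥0 → ℝ≥0 with limsup_{t→∞} f(t) ≥ 1, the exponential growth rate of T ↦ ∫_0^T f(t) dt is at most the exponential growth rate of f, i.e. limsup_{T→∞} (1/T) log(∫_0^T f) ≤ limsup_{T→∞} (1/T) log f(T). -/
open Filter MeasureTheory

/-- Exponential growth rate of a function of a real variable, in the extended reals. -/
noncomputable def expGrowth (f : ℝ → ℝ) : EReal :=
  Filter.limsup (fun T : ℝ => ((Real.log (f T) / T : ℝ) : EReal)) Filter.atTop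

private lemma log_le_log_aux {x y : ℝ} (hx : 0 ≤ x) (hxy : x ≤ y) (hy : 1 ≤ y) :
    Real.log x ≤ Real.log y := by
  rcases hx.eq_or_lt with h | h
  · rw [← h, Real.log_zero]
    exact Real.log_nonneg hy
  · exact Real.log_le_log h hxy

/-- For a nonnegative function `f`, integrable on compact intervals, with
`limsup_{t→∞} f(t) ≥ 1`, the exponential growth rate of `T ↦ ∫_0^T f` is at most the
exponential growth rate of `f`. -/
theorem expGrowth_integral_le (f : ℝ → ℝ) (hf0 : ∀ t, 0 ≤ f t)
    (hint : ∀ T : ℝ, IntervalIntegrable f MeasureTheory.volume 0 T)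
    (hlimsup : (1 : EReal) ≤ Filter.limsup (fun t : ℝ => ((f t : ℝ) : EReal)) Filter.atTop) :
    expGrowth (fun T => ∫ t in (0:ℝ)..T, f t) ≤ expGrowth f := by
  rw [← EReal.le_of_forall_lt_iff_le]
  intro c hc
  -- Step 1 : the growth rate of `f` is nonnegative
  have hΓ0 : (0 : EReal) ≤ expGrowth f := by
    by_contra h
    push_neg at h
    obtain ⟨b, hb1, hb2⟩ := EReal.exists_between_coe_real h
    have hb0 : b < 0 := by exact_mod_cast hb2
    have hev : ∀ᶠ t in atTop, ((Real.log (f t) / t : ℝ) : EReal) < (b : EReal) :=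
      eventually_lt_of_limsup_lt hb1
    have hfr : ∃ᶠ t in atTop, (((1:ℝ)/2 : ℝ) : EReal) < ((f t : ℝ) : EReal) := by
      refine frequently_lt_of_lt_limsup (by isBoundedDefault) (lt_of_lt_of_le ?_ hlimsup)
      exact_mod_cast (by norm_num : ((1:ℝ)/2) < (1:ℝ))
    obtain ⟨t, ht1, ht2, ht3⟩ :=
      (hfr.and_eventually (hev.and (eventually_ge_atTop (1 + Real.log 2 / (-b))))).exists
    have h1 : (1:ℝ)/2 < f t := by exact_mod_cast ht1
    have h2 : Real.log (f t) / t < b := by exact_mod_cast ht2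
    have hlog2 : (0:ℝ) ≤ Real.log 2 := Real.log_nonneg (by norm_num)
    have ht0 : (0:ℝ) < t := by
      have : (0:ℝ) ≤ Real.log 2 / (-b) := div_nonneg hlog2 (by linarith)
      linarith
    have hlt : Real.log (f t) < b * t := (div_lt_iff₀ ht0).mp h2
    have hge : Real.log ((1:ℝ)/2) ≤ Real.log (f t) := Real.log_le_log (by norm_num) h1.le
    rw [one_div, Real.log_inv] at hge
    have hbt : b * t ≤ b * (1 + Real.log 2 / (-b)) :=
      mul_le_mul_of_nonpos_left ht3 hb0.le
    have hbne : b ≠ 0 := ne_of_lt hb0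
    have heq : b * (1 + Real.log 2 / (-b)) = b - Real.log 2 := by
      rw [mul_add, mul_one, div_neg, mul_neg, mul_div_assoc', mul_div_cancel_left₀ _ hbne]
      ring
    rw [heq] at hbt
    linarith
  have hc0 : (0:ℝ) < c := by
    have := lt_of_le_of_lt hΓ0 hc
    exact_mod_cast this
  -- Step 2 : eventual exponential bound on f
  have hev : ∀ᶠ t in atTop, ((Real.log (f t) / t : ℝ) : EReal) < (c : EReal) :=
    eventually_lt_of_limsup_lt hc
  have hev2 : ∀ᶠ t in atTop, f t ≤ Real.exp (c * t) := by
    filter_upwards [hev, eventually_gt_atTop (0:ℝ)] with t h1 h2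
    have h1' : Real.log (f t) / t < c := by exact_mod_cast h1
    have hle : Real.log (f t) ≤ c * t := ((div_lt_iff₀ h2).mp h1').le
    exact (Real.le_exp_log (f t)).trans (Real.exp_le_exp.mpr hle)
  obtain ⟨t₀, ht₀⟩ := eventually_atTop.mp (hev2.and (eventually_ge_atTop (1:ℝ)))
  have ht₀1 : (1:ℝ) ≤ t₀ := (ht₀ t₀ le_rfl).2
  set C := ∫ t in (0:ℝ)..t₀, f t with hCdef
  have hC0 : 0 ≤ C :=
    intervalIntegral.integral_nonneg (by linarith) (fun t _ => hf0 t)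
  -- Step 3 : eventual bound on the integral's growth
  have key : ∀ᶠ T in atTop, ((Real.log (∫ t in (0:ℝ)..T, f t) / T : ℝ) : EReal)
      ≤ ((Real.log (1 + C + T) / T + c : ℝ) : EReal) := by
    filter_upwards [eventually_ge_atTop t₀] with T hT
    have hT0 : (0:ℝ) < T := by linarith
    have hint' : IntervalIntegrable f volume t₀ T := (hint t₀).symm.trans (hint T)
    have hsplit : ∫ t in (0:ℝ)..T, f t = C + ∫ t in t₀..T, f t :=
      (intervalIntegral.integral_add_adjacent_intervals (hint t₀) hint').symm
    have hmono : ∫ t in t₀..T, f t ≤ ∫ _t in t₀..T, Real.exp (c * T) := by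
      apply intervalIntegral.integral_mono_on hT hint' intervalIntegrable_const
      intro x hx
      refine ((ht₀ x hx.1).1).trans (Real.exp_le_exp.mpr ?_)
      exact mul_le_mul_of_nonneg_left hx.2 hc0.le
    rw [intervalIntegral.integral_const, smul_eq_mul] at hmono
    have hexppos : (0:ℝ) < Real.exp (c * T) := Real.exp_pos _
    have h1 : ∫ t in (0:ℝ)..T, f t ≤ C + T * Real.exp (c * T) := by
      rw [hsplit]
      nlinarith
    have hexp1 : (1:ℝ) ≤ Real.exp (c * T) := Real.one_le_exp (by positivity)
    have h2 : ∫ t in (0:ℝ)..T, f t ≤ (1 + C + T) * Real.exp (c * T) := by nlinarith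
    have hy1 : (1:ℝ) ≤ (1 + C + T) * Real.exp (c * T) := by nlinarith
    have hI0 : 0 ≤ ∫ t in (0:ℝ)..T, f t :=
      intervalIntegral.integral_nonneg hT0.le (fun t _ => hf0 t)
    have hlog : Real.log (∫ t in (0:ℝ)..T, f t) ≤ Real.log (1 + C + T) + c * T := by
      have h3 := log_le_log_aux hI0 h2 hy1
      rwa [Real.log_mul (by nlinarith) (Real.exp_ne_zero _), Real.log_exp] at h3
    have hdiv : Real.log (∫ t in (0:ℝ)..T, f t) / T ≤ Real.log (1 + C + T) / T + c := by
      have h4 : Real.log (∫ t in (0:ℝ)..T, f t) / T ≤ (Real.log (1 + C + T) + c * T) / T := by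
        gcongr
      rwa [add_div, mul_div_assoc, div_self hT0.ne', mul_one] at h4
    exact EReal.coe_le_coe_iff.mpr hdiv
  -- Step 4 : the bound tends to c
  have hlo : (fun T : ℝ => Real.log (1 + C + T)) =o[Filter.atTop] (fun T : ℝ => T) := by
    have hcomp := Real.isLittleO_log_id_atTop.comp_tendsto
      (tendsto_atTop_add_const_left atTop (1 + C) tendsto_id)
    simp only [Function.comp_def, id_eq] at hcomp
    refine hcomp.trans_isBigO ?_
    rw [Asymptotics.isBigO_iff]
    refine ⟨2, ?_⟩
    filter_upwards [eventually_ge_atTop (1 + C)] with T hT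
    have hT0 : (0:ℝ) ≤ T := by linarith
    rw [Real.norm_eq_abs, Real.norm_eq_abs, abs_of_nonneg (by linarith), abs_of_nonneg hT0]
    linarith
  have h0 : Tendsto (fun T : ℝ => Real.log (1 + C + T) / T) atTop (nhds 0) :=
    hlo.tendsto_div_nhds_zero
  have htend : Tendsto (fun T : ℝ => Real.log (1 + C + T) / T + c) atTop (nhds c) := by
    simpa using h0.add tendsto_const_nhds
  have hlim : Filter.limsup (fun T : ℝ => ((Real.log (1 + C + T) / T + c : ℝ) : EReal))
      atTop = (c : EReal) :=
    (EReal.tendsto_coe.mpr htend).limsup_eq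
  calc expGrowth (fun T => ∫ t in (0:ℝ)..T, f t)
      ≤ Filter.limsup (fun T : ℝ => ((Real.log (1 + C + T) / T + c : ℝ) : EReal)) atTop :=
        limsup_le_limsup key
    _ = (c : EReal) := hlim
end

section
/- A continuous self-map φ of a compact metric space all of whose orbits converge to a single fixed point p has topological entropy zero. -/
open Filter

variable {M : Type*}

/-- `S` is `(K,δ)`-separated for the map `φ` and distance function `d`: any two distinct
points of `S` are at distance `≥ δ` at some iterate `φ^k`, `0 ≤ k ≤ K`. -/
def IsSeparatedSet (d : M → M → ℝ) (φ : M → M) (K : ℕ) (δ : ℝ) (S : Finset M) : Prop :=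
  ∀ x ∈ S, ∀ y ∈ S, x ≠ y → ∃ k ≤ K, δ ≤ d (φ^[k] x) (φ^[k] y)

/-- Maximal cardinality of a `(K,δ)`-separated set. -/
noncomputable def sepNum (d : M → M → ℝ) (φ : M → M) (K : ℕ) (δ : ℝ) : ℕ :=
  sSup {n : ℕ | ∃ S : Finset M, IsSeparatedSet d φ K δ S ∧ S.card = n}

/-- Bowen–Dinaburg topological entropy of `φ` with respect to the distance function `d`,
valued in the extended reals. -/
noncomputable def htop (d : M → M → ℝ) (φ : M → M) : EReal :=
  ⨆ δ : {δ : ℝ // 0 < δ},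
    Filter.limsup (fun K : ℕ => ((Real.log (sepNum d φ K δ.1) / K : ℝ) : EReal))
      Filter.atTop

/-!
Fix `δ > 0` and let `C = {y | δ / 2 ≤ dist y p}`. Every orbit eventually leaves the closed set
`C` for good, and a compactness argument upgrades this to: the fraction of time an orbit segment
of length `L` spends in `C` tends to `0` uniformly in the starting point. Two orbits that are
`δ`-apart at some time must be told apart at a time when one of them lies in `C`, so a
`(K, δ)`-separated set is coded injectively by the times spent in `C` together with the cells of a
finite `δ / 2`-net visited then. With at most `K / i + 1` such times there are `e ^ O(K log i / i)`
codes, so the exponential growth rate of `sepNum` is `O(log i / i)` for every `i`, hence zero.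
-/

namespace Nat

theorem sum_range_choose_le_add_choose (n s : ℕ) :
    ∑ j ∈ Finset.range (s + 1), n.choose j ≤ (n + s).choose s := by
  induction s with
  | zero => simp
  | succ s ih =>
    rw [Finset.sum_range_succ, ← Nat.add_assoc, Nat.choose_succ_succ']
    exact Nat.add_le_add ih (Nat.choose_le_choose _ (Nat.le_add_right _ _))

theorem cast_choose_mul_le_exp_one_mul_pow (a s : ℕ) :
    ((a * s).choose s : ℝ) ≤ (Real.exp 1 * a) ^ s := by
  calc ((a * s).choose s : ℝ) ≤ ((a * s : ℕ) : ℝ) ^ s / s.factorial := Nat.choose_le_pow_div s _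
    _ = (a : ℝ) ^ s * ((s : ℝ) ^ s / s.factorial) := by push_cast; ring
    _ ≤ (a : ℝ) ^ s * Real.exp s := by
      gcongr; exact Real.pow_div_factorial_le_exp _ s.cast_nonneg s
    _ = (Real.exp 1 * a) ^ s := by rw [mul_pow, Real.exp_one_pow, mul_comm]

end Nat

theorem Finset.card_filter_powerset_card_le {α : Type*} (T : Finset α) (s : ℕ) :
    {A ∈ T.powerset | A.card ≤ s}.card ≤ (T.card + s).choose s := by
  classical
  have hsub : {A ∈ T.powerset | A.card ≤ s} ⊆ (range (s + 1)).biUnion (T.powersetCard ·) := by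
    intro A hA
    rw [mem_filter, mem_powerset] at hA
    exact mem_biUnion.2
      ⟨A.card, mem_range.2 (Nat.lt_succ_of_le hA.2), mem_powersetCard.2 ⟨hA.1, rfl⟩⟩
  calc {A ∈ T.powerset | A.card ≤ s}.card
      ≤ ∑ j ∈ range (s + 1), (T.powersetCard j).card :=
        (card_le_card hsub).trans card_biUnion_le
    _ = ∑ j ∈ range (s + 1), T.card.choose j := by simp only [card_powersetCard]
    _ ≤ (T.card + s).choose s := Nat.sum_range_choose_le_add_choose _ _

theorem tendsto_zero_of_forall_eventually_le {α β : Type*} {l : Filter α} {l' : Filter β}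
    [l'.NeBot] {a : α → ℝ} {b : β → ℝ} (ha : ∀ x, 0 ≤ a x) (hb : Tendsto b l' (nhds 0))
    (hab : ∀ᶠ j in l', ∀ᶠ x in l, a x ≤ b j) : Tendsto a l (nhds 0) := by
  refine tendsto_order.2 ⟨fun γ hγ => Eventually.of_forall fun x => hγ.trans_le (ha x),
    fun γ hγ => ?_⟩
  obtain ⟨j, hbj, hj⟩ := ((hb.eventually (gt_mem_nhds hγ)).and hab).exists
  exact hj.mono fun x hx => hx.trans_lt hbj

theorem Real.tendsto_one_add_log_const_mul_div_atTop {c : ℝ} (hc : 0 < c) :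
    Tendsto (fun x => (1 + Real.log (c * x)) / x) atTop (nhds 0) :=
  ((Asymptotics.isLittleO_const_id_atTop 1).add ((Real.isLittleO_log_id_atTop.comp_tendsto
    (tendsto_id.const_mul_atTop hc)).trans_isBigO
      (Asymptotics.isBigO_const_mul_self c id atTop))).tendsto_div_nhds_zero

theorem exists_finset_forall_dist_lt {X : Type*} [PseudoMetricSpace X] [CompactSpace X]
    {ε : ℝ} (hε : 0 < ε) :
    ∃ (F : Finset X) (c : X → X), (∀ z, c z ∈ F) ∧ ∀ z, dist z (c z) < ε := by
  obtain ⟨t, -, ht, hcover⟩ := finite_cover_balls_of_compact (isCompact_univ (X := X)) hε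
  have hnear : ∀ z, ∃ q ∈ ht.toFinset, dist z q < ε := fun z => by
    obtain ⟨q, hq, hzq⟩ := Set.mem_iUnion₂.1 (hcover (Set.mem_univ z))
    exact ⟨q, ht.mem_toFinset.2 hq, hzq⟩
  choose c hcF hc using hnear
  exact ⟨_, c, hcF, hc⟩

section visitCount

variable {X : Type*} (φ : X → X) (C : Set X)

open Classical in
noncomputable def visitCount (L : ℕ) (x : X) : ℕ :=
  {k ∈ Finset.range L | φ^[k] x ∈ C}.card

variable {φ C}

theorem visitCount_le (L : ℕ) (x : X) : visitCount φ C L x ≤ L := by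
  classical
  exact (Finset.card_filter_le _ _).trans (Finset.card_range L).le

theorem visitCount_add (t m : ℕ) (x : X) :
    visitCount φ C (t + m) x = visitCount φ C t x + visitCount φ C m (φ^[t] x) := by
  classical
  simp only [visitCount, Finset.card_filter, Finset.sum_range_add]
  simp only [Nat.add_comm t, Function.iterate_add_apply]

theorem visitCount_le_of_forall_le_notMem {N : ℕ} {x : X} (h : ∀ n, N ≤ n → φ^[n] x ∉ C)
    (L : ℕ) : visitCount φ C L x ≤ N := by
  classical
  refine (Finset.card_le_card fun k hk => ?_).trans (Finset.card_range N).le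
  rw [Finset.mem_filter] at hk
  exact Finset.mem_range.2 (lt_of_not_ge fun hNk => h k hNk hk.2)

theorem isClosed_setOf_le_visitCount [TopologicalSpace X] (hφ : Continuous φ) (hC : IsClosed C)
    (m c : ℕ) : IsClosed {y | c ≤ visitCount φ C m y} := by
  classical
  have hunion : {y | c ≤ visitCount φ C m y} =
      ⋃ A ∈ Finset.powersetCard c (Finset.range m), ⋂ k ∈ A, φ^[k] ⁻¹' C := by
    ext y
    simp only [Set.mem_ofPred_eq, Set.mem_iUnion, Set.mem_iInter, Set.mem_preimage,
      Finset.mem_powersetCard, exists_prop]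
    constructor
    · intro hc
      obtain ⟨A, hA, rfl⟩ := Finset.exists_subset_card_eq hc
      exact ⟨A, ⟨hA.trans (Finset.filter_subset _ _), rfl⟩,
        fun k hk => (Finset.mem_filter.1 (hA hk)).2⟩
    · rintro ⟨A, ⟨hA, rfl⟩, hAC⟩
      exact Finset.card_le_card fun k hk => Finset.mem_filter.2 ⟨hA hk, hAC k hk⟩
  rw [hunion]
  exact (Finset.finite_toSet _).isClosed_biUnion fun A _ =>
    isClosed_biInter fun k _ => hC.preimage (hφ.iterate k)

/-- The witness `t` minimizes `2 i · visitCount φ C u x - u` over `u ≤ L`. -/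
theorem exists_le_mul_visitCount_of_lt_mul_visitCount {i L : ℕ} {x : X}
    (h : L < i * visitCount φ C L x) :
    ∃ t ≤ L, L < 2 * i * (L - t) ∧ ∀ m ≤ L - t, m ≤ 2 * i * visitCount φ C m (φ^[t] x) := by
  obtain ⟨t, ht, hmin⟩ := Finset.exists_min_image (Finset.range (L + 1))
    (fun u => (2 * i * visitCount φ C u x : ℤ) - u) Finset.nonempty_range_add_one
  have ht : t ≤ L := Nat.lt_succ_iff.1 (Finset.mem_range.1 ht)
  have hstep : ∀ m ≤ L - t, m ≤ 2 * i * visitCount φ C m (φ^[t] x) := fun m hm => by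
    have := hmin (t + m) (Finset.mem_range.2 (by omega))
    rw [visitCount_add] at this
    push_cast at this
    zify
    linarith
  have hstart : 2 * i * visitCount φ C t x ≤ t := by
    have := hmin 0 (Finset.mem_range.2 (by omega))
    rw [show visitCount φ C 0 x = 0 by simp [visitCount]] at this
    push_cast at this
    zify
    linarith
  have hsplit : visitCount φ C L x = visitCount φ C t x + visitCount φ C (L - t) (φ^[t] x) := by
    rw [← visitCount_add, Nat.add_sub_cancel' ht]
  have hvis := Nat.mul_le_mul_left i (visitCount_le (φ := φ) (C := C) (L - t) (φ^[t] x))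
  refine ⟨t, ht, ?_, hstep⟩
  rw [hsplit, Nat.mul_add] at h
  linarith

/-- Were the bound to fail for arbitrarily long times, Cantor's intersection theorem would
produce a point that spends a fraction `1 / (2 i)` of every initial stretch of its orbit in `C`,
hence visits `C` infinitely often. -/
theorem exists_forall_mul_visitCount_le [TopologicalSpace X] [CompactSpace X]
    (hφ : Continuous φ) (hC : IsClosed C) (hleave : ∀ x, ∀ᶠ n in atTop, φ^[n] x ∉ C) (i : ℕ) :
    ∃ L₀, ∀ x L, L₀ ≤ L → i * visitCount φ C L x ≤ L := by
  by_contra! hbad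
  let A : ℕ → Set X := fun N => {y | ∀ m ≤ N, m / (2 * i) ≤ visitCount φ C m y}
  have hA_closed : ∀ N, IsClosed (A N) := fun N => by
    simpa only [A, Set.ofPred_forall] using isClosed_iInter fun m =>
      isClosed_iInter fun _ => isClosed_setOf_le_visitCount hφ hC m (m / (2 * i))
  have hA_nonempty : ∀ N, (A N).Nonempty := by
    intro N
    obtain ⟨x, L, hNL, hL⟩ := hbad (2 * i * N)
    obtain ⟨t, -, hlong, hdense⟩ := exists_le_mul_visitCount_of_lt_mul_visitCount hL
    have hN : N ≤ L - t := (Nat.lt_of_mul_lt_mul_left (hNL.trans_lt hlong)).le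
    exact ⟨φ^[t] x, fun m hm => Nat.div_le_of_le_mul (hdense m (hm.trans hN))⟩
  obtain ⟨y, hy⟩ := IsCompact.nonempty_iInter_of_sequence_nonempty_isCompact_isClosed A
    (fun N y hy m hm => hy m (hm.trans N.le_succ)) hA_nonempty (hA_closed 0).isCompact hA_closed
  obtain ⟨N, hN⟩ := eventually_atTop.1 (hleave y)
  have hi : 0 < i := by
    obtain ⟨x, L, -, hL⟩ := hbad 0
    exact Nat.pos_of_ne_zero fun hi => by simp [hi] at hL
  have hmany := Set.mem_iInter.1 hy (2 * i * (N + 1)) _ le_rfl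
  rw [Nat.mul_div_cancel_left _ (by omega)] at hmany
  exact absurd (visitCount_le_of_forall_le_notMem hN _) (not_le.2 hmany)

end visitCount

section separated

variable {d : M → M → ℝ} {φ : M → M} {K : ℕ} {δ : ℝ} {C : Set M} {ι : Type*} {F : Finset ι}
  {c : M → ι}

/-- A separated set is coded injectively by recording, at each time `k ≤ K` at which the orbit
lies in `C`, the cell `c (φ^[k] x)` containing it. -/
theorem IsSeparatedSet.card_le_choose {S : Finset M} (hS : IsSeparatedSet d φ K δ S)
    (hC : ∀ z ∉ C, ∀ w ∉ C, d z w < δ) (hcF : ∀ z, c z ∈ F)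
    (hc : ∀ z w, c z = c w → d z w < δ) {s : ℕ} (hs : ∀ x, visitCount φ C (K + 1) x ≤ s) :
    S.card ≤ ((K + 1) * F.card + s).choose s := by
  classical
  let code : M → Finset (ℕ × ι) := fun x =>
    {k ∈ Finset.range (K + 1) | φ^[k] x ∈ C}.image fun k => (k, c (φ^[k] x))
  have hcode_mem : ∀ x, code x ∈ {A ∈ (Finset.range (K + 1) ×ˢ F).powerset | A.card ≤ s} := by
    refine fun x => Finset.mem_filter.2 ⟨Finset.mem_powerset.2 fun a ha => ?_,
      Finset.card_image_le.trans (hs x)⟩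
    obtain ⟨k, hk, rfl⟩ := Finset.mem_image.1 ha
    exact Finset.mem_product.2 ⟨(Finset.mem_filter.1 hk).1, hcF _⟩
  have hcode_eq : ∀ x y, code x = code y → ∀ k ≤ K, φ^[k] x ∈ C →
      c (φ^[k] y) = c (φ^[k] x) := by
    intro x y hxy k hk hxk
    have hmem : (k, c (φ^[k] x)) ∈ code y :=
      hxy ▸ Finset.mem_image_of_mem _ (Finset.mem_filter.2 ⟨Finset.mem_range.2 (by omega), hxk⟩)
    obtain ⟨k', -, hk'⟩ := Finset.mem_image.1 hmem
    obtain ⟨rfl, hck⟩ := Prod.mk.inj hk'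
    exact hck
  have hinj : Set.InjOn code S := by
    intro x hx y hy hxy
    by_contra hne
    obtain ⟨k, hk, hδk⟩ := hS x hx y hy hne
    refine hδk.not_gt ?_
    by_cases hxC : φ^[k] x ∈ C
    · exact hc _ _ (hcode_eq x y hxy k hk hxC).symm
    by_cases hyC : φ^[k] y ∈ C
    · exact hc _ _ (hcode_eq y x hxy.symm k hk hyC)
    exact hC _ hxC _ hyC
  calc S.card ≤ {A ∈ (Finset.range (K + 1) ×ˢ F).powerset | A.card ≤ s}.card :=
        Finset.card_le_card_of_injOn code (fun x _ => hcode_mem x) hinj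
    _ ≤ ((Finset.range (K + 1) ×ˢ F).card + s).choose s := Finset.card_filter_powerset_card_le _ _
    _ = ((K + 1) * F.card + s).choose s := by rw [Finset.card_product, Finset.card_range]

theorem sepNum_le {B : ℕ} (h : ∀ S, IsSeparatedSet d φ K δ S → S.card ≤ B) :
    sepNum d φ K δ ≤ B :=
  csSup_le ⟨0, ∅, by simp [IsSeparatedSet], rfl⟩ fun _ ⟨S, hS, hcard⟩ => hcard ▸ h S hS

/-- With `R = F.card` and `s = K / i + 1` visits to `C` allowed, the coding bound
`C((K + 1) R + s, s)` is at most `C((R + 1) i s, s) ≤ (e (R + 1) i) ^ s`. -/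
theorem log_sepNum_div_le (hC : ∀ z ∉ C, ∀ w ∉ C, d z w < δ) (hcF : ∀ z, c z ∈ F)
    (hc : ∀ z w, c z = c w → d z w < δ) {i : ℕ} (hi : 0 < i) (hiK : i ≤ K)
    (hdense : ∀ x, i * visitCount φ C (K + 1) x ≤ K + 1) :
    Real.log (sepNum d φ K δ) / K ≤ 2 * ((1 + Real.log ((F.card + 1) * i)) / i) := by
  set s := K / i + 1
  set a := (F.card + 1) * i
  have hKs : K + 1 ≤ i * s := Nat.lt_mul_div_succ K hi
  have hs : ∀ x, visitCount φ C (K + 1) x ≤ s := fun x =>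
    Nat.le_of_mul_le_mul_left ((hdense x).trans hKs) hi
  have hsep : sepNum d φ K δ ≤ (a * s).choose s := by
    refine sepNum_le fun S hS => (hS.card_le_choose hC hcF hc hs).trans
      (Nat.choose_le_choose _ ?_)
    calc (K + 1) * F.card + s ≤ (i * s) * F.card + i * s :=
          Nat.add_le_add (Nat.mul_le_mul_right _ hKs) (Nat.le_mul_of_pos_left s hi)
      _ = a * s := by ring
  have ha : (1 : ℝ) ≤ a := by exact_mod_cast Nat.mul_pos F.card.succ_pos hi
  have hlog_a : 0 ≤ 1 + Real.log a := by linarith [Real.log_nonneg ha]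
  have hlog : Real.log (sepNum d φ K δ) ≤ s * (1 + Real.log a) := by
    rcases Nat.eq_zero_or_pos (sepNum d φ K δ) with h0 | hpos
    · rw [h0, Nat.cast_zero, Real.log_zero]
      positivity
    calc Real.log (sepNum d φ K δ) ≤ Real.log ((Real.exp 1 * a) ^ s) :=
          Real.log_le_log (by exact_mod_cast hpos)
            ((Nat.cast_le.2 hsep).trans (Nat.cast_choose_mul_le_exp_one_mul_pow a s))
      _ = s * (1 + Real.log a) := by
          rw [Real.log_pow, Real.log_mul (Real.exp_ne_zero 1) (by positivity), Real.log_exp]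
  have hiR : (0 : ℝ) < i := by exact_mod_cast hi
  have hs_le : (s : ℝ) ≤ 2 * K / i := by
    have h1 : ((K / i : ℕ) : ℝ) ≤ K / i := Nat.cast_div_le
    have h2 : (1 : ℝ) ≤ K / i := by rw [le_div_iff₀ hiR, one_mul]; exact_mod_cast hiK
    push_cast [s]
    linarith [show (2 * K / i : ℝ) = K / i + K / i by ring]
  have hK : (0 : ℝ) < K := by exact_mod_cast hi.trans_le hiK
  calc Real.log (sepNum d φ K δ) / K ≤ s * (1 + Real.log a) / K := by gcongr
    _ ≤ 2 * K / i * (1 + Real.log a) / K := by gcongr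
    _ = 2 * ((1 + Real.log ((F.card + 1) * i)) / i) := by
        simp only [a]; push_cast; field_simp

end separated

theorem htop_eq_zero_of_tendsto {d : M → M → ℝ} {φ : M → M}
    (h : ∀ δ > 0, Tendsto (fun K : ℕ => Real.log (sepNum d φ K δ) / K) atTop (nhds 0)) :
    htop d φ = 0 := by
  have hlimsup : ∀ δ : {δ : ℝ // 0 < δ}, limsup (fun K : ℕ =>
      ((Real.log (sepNum d φ K δ.1) / K : ℝ) : EReal)) atTop = 0 := fun δ =>
    (EReal.tendsto_coe.2 (h δ.1 δ.2)).limsup_eq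
  have : Nonempty {δ : ℝ // 0 < δ} := ⟨⟨1, one_pos⟩⟩
  rw [htop, iSup_congr hlimsup, iSup_const]

theorem htop_eq_zero_of_orbits_tendsto_fixed_general
    {M : Type*} [MetricSpace M] [CompactSpace M]
    (φ : M → M) (hφ : Continuous φ) (p : M)
    (horb : ∀ x : M, Filter.Tendsto (fun n : ℕ => φ^[n] x) Filter.atTop (nhds p)) :
    htop (fun x y : M => dist x y) φ = 0 := by
  refine htop_eq_zero_of_tendsto fun δ hδ => ?_
  let C : Set M := {y | δ / 2 ≤ dist y p}
  have hC_closed : IsClosed C := isClosed_le continuous_const (continuous_id.dist continuous_const)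
  have hC_small : ∀ z ∉ C, ∀ w ∉ C, dist z w < δ := fun z hz w hw => by
    simp only [C, Set.mem_ofPred_eq, not_le] at hz hw
    linarith [dist_triangle_right z w p]
  have hleave : ∀ x, ∀ᶠ n in atTop, φ^[n] x ∉ C := fun x =>
    (horb x).eventually (Metric.ball_mem_nhds p (half_pos hδ)) |>.mono fun n hn => not_le.2 hn
  obtain ⟨F, c, hcF, hc⟩ := exists_finset_forall_dist_lt (X := M) (half_pos hδ)
  have hc_small : ∀ z w, c z = c w → dist z w < δ := fun z w hzw => by
    linarith [dist_triangle_right z w (c z), hc z, hzw ▸ hc w]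
  have hbound : Tendsto (fun i : ℕ => 2 * ((1 + Real.log ((F.card + 1) * i)) / i)) atTop
      (nhds 0) := by
    simpa using ((Real.tendsto_one_add_log_const_mul_div_atTop
      (by positivity : (0 : ℝ) < F.card + 1)).comp tendsto_natCast_atTop_atTop).const_mul 2
  refine tendsto_zero_of_forall_eventually_le
    (fun K => div_nonneg (Real.log_natCast_nonneg _) K.cast_nonneg) hbound
    ((eventually_gt_atTop 0).mono fun i hi => ?_)
  obtain ⟨L₀, hL₀⟩ := exists_forall_mul_visitCount_le hφ hC_closed hleave i
  filter_upwards [eventually_ge_atTop (max L₀ i)] with K hK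
  exact log_sepNum_div_le hC_small hcF hc_small hi (le_of_max_le_right hK)
    fun x => hL₀ x _ ((le_of_max_le_left hK).trans K.le_succ)

/-- A continuous self-map of a compact metric space all of whose orbits converge to a
single fixed point `p` has topological entropy zero. -/
theorem htop_eq_zero_of_orbits_tendsto_fixed
    {M : Type*} [MetricSpace M] [CompactSpace M]
    (φ : M → M) (hφ : Continuous φ) (p : M) (hp : φ p = p)
    (horb : ∀ x : M, Filter.Tendsto (fun n : ℕ => φ^[n] x) Filter.atTop (nhds p)) :
    htop (fun x y : M => dist x y) φ = 0 :=
  htop_eq_zero_of_orbits_tendsto_fixed_general φ hφ p horb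
end
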